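/- arXiv:2504.09669 — 4 statements merged into one kernel-verified Lean document; each statement's English description precedes it below -/
import Mathlib

section
/- Let $v : 2^U \to \mathbb{R}_{\geq 0}$ be a monotone submodular function and $\phi : U \to \mathbb{R}_{\geq 0}$. Define $\hat{v}(S) := \min_{T \subseteq S} \{ v(T) + \sum_{j \in S\setminus T} \phi_j \}$. Then $\hat{v}$ is submodular: for all $S, T \subseteq U$, $\hat{v}(S)+\hat{v}(T) \geq \hat{v}(S\cap T)+\hat{v}(S\cup T)$. -/
/-!
Take minimisers `A ⊆ S` and `B ⊆ T` in the definitions of `vhat v φ S` and `vhat v φ T`. Then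
`A ∩ B ⊆ S ∩ T` and `A ∪ B ⊆ S ∪ T` are admissible for `S ∩ T` and `S ∪ T`, submodularity of `v`
handles the `v`-parts, and the `φ`-parts agree exactly: `∑_{S \ A} φ = ∑_S φ - ∑_A φ`, and
`X ↦ ∑_X φ` is modular.
-/

open Finset

/-- The greedy proxy function: `vhat v φ S = min_{T ⊆ S} (v T + ∑_{j ∈ S \ T} φ j)`. -/
noncomputable def vhat {U : Type*} [DecidableEq U] (v : Finset U → ℝ) (φ : U → ℝ)
    (S : Finset U) : ℝ :=
  S.powerset.inf' ⟨∅, Finset.mem_powerset.mpr (Finset.empty_subset S)⟩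
    (fun T => v T + ∑ j ∈ S \ T, φ j)

section SumSdiff

variable {ι M : Type*} [DecidableEq ι] [AddCommGroup M]

theorem Finset.sum_sdiff_add_sum_sdiff_eq_inter_union (f : ι → M) {S T A B : Finset ι}
    (hA : A ⊆ S) (hB : B ⊆ T) :
    ∑ j ∈ S \ A, f j + ∑ j ∈ T \ B, f j
      = ∑ j ∈ (S ∩ T) \ (A ∩ B), f j + ∑ j ∈ (S ∪ T) \ (A ∪ B), f j := by
  rw [sum_sdiff_eq_sub hA, sum_sdiff_eq_sub hB, sum_sdiff_eq_sub (inter_subset_inter hA hB),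
    sum_sdiff_eq_sub (union_subset_union hA hB),
    eq_sub_of_add_eq (sum_union_inter (s₁ := S) (s₂ := T) (f := f)),
    eq_sub_of_add_eq (sum_union_inter (s₁ := A) (s₂ := B) (f := f))]
  abel

end SumSdiff

section Vhat

variable {U : Type*} [DecidableEq U] (v : Finset U → ℝ) (φ : U → ℝ)

theorem vhat_le {S T : Finset U} (hT : T ⊆ S) : vhat v φ S ≤ v T + ∑ j ∈ S \ T, φ j :=
  inf'_le _ (mem_powerset.mpr hT)

theorem exists_subset_vhat_eq (S : Finset U) :
    ∃ T ⊆ S, vhat v φ S = v T + ∑ j ∈ S \ T, φ j := by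
  obtain ⟨T, hT, hmin⟩ := exists_mem_eq_inf' (powerset_nonempty S)
    (fun T => v T + ∑ j ∈ S \ T, φ j)
  exact ⟨T, mem_powerset.mp hT, hmin⟩

end Vhat

theorem vhat_submodular_general {U : Type*} [DecidableEq U]
    (v : Finset U → ℝ) (φ : U → ℝ)
    (hsub : ∀ S T : Finset U, v S + v T ≥ v (S ∩ T) + v (S ∪ T)) :
    ∀ S T : Finset U, vhat v φ S + vhat v φ T ≥ vhat v φ (S ∩ T) + vhat v φ (S ∪ T) := by
  intro S T
  obtain ⟨A, hAS, hA⟩ := exists_subset_vhat_eq v φ S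
  obtain ⟨B, hBT, hB⟩ := exists_subset_vhat_eq v φ T
  have h_inter := vhat_le v φ (inter_subset_inter hAS hBT)
  have h_union := vhat_le v φ (union_subset_union hAS hBT)
  have h_modular := sum_sdiff_add_sum_sdiff_eq_inter_union φ hAS hBT
  linarith [hsub A B]

theorem vhat_submodular {U : Type*} [DecidableEq U] [Fintype U]
    (v : Finset U → ℝ) (φ : U → ℝ)
    (hnn : ∀ S, 0 ≤ v S)
    (hmono : ∀ S T : Finset U, S ⊆ T → v S ≤ v T)
    (hsub : ∀ S T : Finset U, v S + v T ≥ v (S ∩ T) + v (S ∪ T))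
    (hφ : ∀ j, 0 ≤ φ j) :
    ∀ S T : Finset U, vhat v φ S + vhat v φ T ≥ vhat v φ (S ∩ T) + vhat v φ (S ∪ T) :=
  vhat_submodular_general v φ hsub
end

section
/- Let $v : 2^U \to \mathbb{R}_{\geq 0}$ be a monotone submodular function with $v(\emptyset)=0$, let $(e_1,\dots,e_n)$ be an ordering of a subset $P \subseteq U$, and define $\phi_{e_t} := v(\{e_1,\dots,e_t\}) - v(\{e_1,\dots,e_{t-1}\})$ for each $t$. Then for every $T \subseteq P$, $v(T) \geq \sum_{j \in T} \phi_j$. -/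
open Finset

/-- The first `t` elements of the ordering `e`. -/
def prefixSet {U : Type*} [DecidableEq U] {n : ℕ} (e : Fin n → U) (t : ℕ) : Finset U :=
  (Finset.univ.filter fun i : Fin n => (i : ℕ) < t).image e

/-! By induction on `t`, `∑ j ∈ T ∩ prefixSet e t, φ j ≤ v (T ∩ prefixSet e t)`: when `e t ∈ T`
is new, adding it to `T ∩ prefixSet e t` gains at least its marginal `φ (e t)` relative to the
larger set `prefixSet e t`, because marginal gains of a submodular function shrink as the base
set grows. At `t = n` the prefix contains `T`. -/

section Prefix

variable {U : Type*} [DecidableEq U] {n : ℕ} (e : Fin n → U)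

@[simp]
theorem prefixSet_zero : prefixSet e 0 = ∅ := by
  simp [prefixSet]

theorem prefixSet_succ (i : Fin n) :
    prefixSet e ((i : ℕ) + 1) = insert (e i) (prefixSet e i) := by
  have hfilter : (univ.filter fun j : Fin n => (j : ℕ) < i + 1) =
      insert i (univ.filter fun j : Fin n => (j : ℕ) < i) := by
    ext j
    simp [le_iff_eq_or_lt, Fin.val_inj]
  rw [prefixSet, hfilter, image_insert, prefixSet]

theorem prefixSet_of_le {t : ℕ} (ht : n ≤ t) : prefixSet e t = univ.image e := by
  rw [prefixSet, filter_true_of_mem fun i _ => lt_of_lt_of_le i.isLt ht]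

end Prefix

theorem marginal_le_marginal_of_subset {U : Type*} [DecidableEq U] {v : Finset U → ℝ}
    (hsub : ∀ S T : Finset U, v S + v T ≥ v (S ∩ T) + v (S ∪ T))
    {A B : Finset U} (hAB : A ⊆ B) {x : U} (hx : x ∉ B) :
    v (insert x B) - v B ≤ v (insert x A) - v A := by
  have h := hsub (insert x A) B
  rw [insert_inter_of_notMem hx, inter_eq_left.mpr hAB, insert_union,
    union_eq_right.mpr hAB] at h
  linarith

theorem sum_inter_prefixSet_le {U : Type*} [DecidableEq U] {v : Finset U → ℝ}
    (hempty : v ∅ = 0) (hsub : ∀ S T : Finset U, v S + v T ≥ v (S ∩ T) + v (S ∪ T))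
    {n : ℕ} (e : Fin n → U) (φ : U → ℝ)
    (hφ : ∀ t : Fin n, φ (e t) = v (prefixSet e ((t : ℕ) + 1)) - v (prefixSet e (t : ℕ)))
    (T : Finset U) (t : ℕ) :
    ∑ j ∈ T ∩ prefixSet e t, φ j ≤ v (T ∩ prefixSet e t) := by
  induction t with
  | zero => simp [hempty]
  | succ t ih =>
    by_cases htn : t < n
    swap
    · rwa [prefixSet_of_le e (by omega : n ≤ t + 1), ← prefixSet_of_le e (not_lt.mp htn)]
    set i : Fin n := ⟨t, htn⟩
    have hsucc : prefixSet e (t + 1) = insert (e i) (prefixSet e t) := prefixSet_succ e i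
    by_cases hnew : e i ∈ prefixSet e t
    · rwa [hsucc, insert_eq_of_mem hnew]
    by_cases hT : e i ∈ T
    swap
    · rwa [hsucc, inter_insert_of_notMem hT]
    have hmarg := marginal_le_marginal_of_subset hsub (inter_subset_right (s₁ := T)) hnew
    rw [← hsucc, ← hφ i] at hmarg
    rw [hsucc, inter_insert_of_mem hT, sum_insert fun h => hnew (mem_of_mem_inter_right h)]
    linarith

theorem value_ge_sum_marginals_general {U : Type*} [DecidableEq U]
    (v : Finset U → ℝ)
    (hempty : v ∅ = 0)
    (hsub : ∀ S T : Finset U, v S + v T ≥ v (S ∩ T) + v (S ∪ T))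
    {n : ℕ} (e : Fin n → U)
    (φ : U → ℝ)
    (hφ : ∀ t : Fin n, φ (e t) = v (prefixSet e ((t : ℕ) + 1)) - v (prefixSet e (t : ℕ)))
    (T : Finset U) (hT : T ⊆ Finset.univ.image e) :
    v T ≥ ∑ j ∈ T, φ j := by
  have h := sum_inter_prefixSet_le hempty hsub e φ hφ T n
  rwa [prefixSet_of_le e le_rfl, inter_eq_left.mpr hT] at h

theorem value_ge_sum_marginals {U : Type*} [DecidableEq U] [Fintype U]
    (v : Finset U → ℝ)
    (hnn : ∀ S, 0 ≤ v S) (hempty : v ∅ = 0)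
    (hmono : ∀ S T : Finset U, S ⊆ T → v S ≤ v T)
    (hsub : ∀ S T : Finset U, v S + v T ≥ v (S ∩ T) + v (S ∪ T))
    {n : ℕ} (e : Fin n → U) (hinj : Function.Injective e)
    (φ : U → ℝ)
    (hφ : ∀ t : Fin n, φ (e t) = v (prefixSet e ((t : ℕ) + 1)) - v (prefixSet e (t : ℕ)))
    (T : Finset U) (hT : T ⊆ Finset.univ.image e) :
    v T ≥ ∑ j ∈ T, φ j :=
  value_ge_sum_marginals_general v hempty hsub e φ hφ T hT
end

section
/- Let $T$ be a random variable with $T \geq 1$ almost surely, let $k \geq 0$, and let $C \geq 0$ be such that $\mathbb{E}[(k - T)^+] \leq C$. Then $\mathbb{E}[(\ln k - \ln T)^+] \leq \ln(1 + C)$. -/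
/-! Since `t ≥ 1`, `(ln k - ln t)⁺ = ln (1 + (k - t)⁺ / t) ≤ ln (1 + (k - t)⁺)`; taking
expectations and applying Jensen's inequality to the concave logarithm bounds the left side
by `ln (1 + 𝔼[(k - T)⁺]) ≤ ln (1 + C)`. -/

open MeasureTheory Real Set

lemma max_log_sub_log_zero_le_log_one_add {k t : ℝ} (hk : 0 ≤ k) (ht : 1 ≤ t) :
    max (log k - log t) 0 ≤ log (1 + max (k - t) 0) := by
  have hm : 0 ≤ max (k - t) 0 := le_max_right _ _
  refine max_le ?_ (log_nonneg (by linarith))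
  rcases hk.eq_or_lt with rfl | hk0
  · linarith [log_nonneg ht, log_nonneg (show 1 ≤ 1 + max (0 - t) 0 by linarith), log_zero]
  have ht0 : 0 < t := by linarith
  rw [← log_div hk0.ne' ht0.ne']
  refine log_le_log (div_pos hk0 ht0) ((div_le_iff₀ ht0).2 ?_)
  nlinarith [le_max_left (k - t) 0]

section

variable {Ω : Type*} [MeasurableSpace Ω] {μ : Measure Ω} {f : Ω → ℝ}

lemma integrable_log_of_one_le (hf : Integrable f μ) (hf1 : ∀ᵐ ω ∂μ, 1 ≤ f ω) :
    Integrable (fun ω => log (f ω)) μ := by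
  refine hf.mono' hf.aemeasurable.log.aestronglyMeasurable ?_
  filter_upwards [hf1] with ω h
  rw [norm_of_nonneg (log_nonneg h)]
  linarith [log_le_sub_one_of_pos (show 0 < f ω by linarith)]

lemma integral_log_le_log_integral [IsProbabilityMeasure μ] (hf : Integrable f μ)
    (hf1 : ∀ᵐ ω ∂μ, 1 ≤ f ω) : ∫ ω, log (f ω) ∂μ ≤ log (∫ ω, f ω ∂μ) :=
  (strictConcaveOn_log_Ioi.concaveOn.subset (Ici_subset_Ioi.2 one_pos)
    (convex_Ici 1)).le_map_integral
    (continuousOn_log.mono fun _ hx => (zero_lt_one.trans_le hx).ne') isClosed_Ici hf1 hf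
    (integrable_log_of_one_le hf hf1)

end

theorem pos_part_log_expectation_bound_general {Ω : Type*} [MeasurableSpace Ω] (μ : Measure Ω)
    [IsProbabilityMeasure μ] (T : Ω → ℝ) (hT1 : ∀ᵐ ω ∂μ, 1 ≤ T ω)
    (k C : ℝ) (hk : 0 ≤ k)
    (hint1 : Integrable (fun ω => max (k - T ω) 0) μ)
    (hbound : ∫ ω, max (k - T ω) 0 ∂μ ≤ C) :
    ∫ ω, max (Real.log k - Real.log (T ω)) 0 ∂μ ≤ Real.log (1 + C) := by
  have hint : Integrable (fun ω => 1 + max (k - T ω) 0) μ := (integrable_const 1).add hint1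
  have hone : ∀ᵐ ω ∂μ, 1 ≤ 1 + max (k - T ω) 0 :=
    ae_of_all _ fun ω => le_add_of_nonneg_right (le_max_right _ _)
  have hmean : 0 ≤ ∫ ω, max (k - T ω) 0 ∂μ := integral_nonneg fun ω => le_max_right _ _
  calc ∫ ω, max (log k - log (T ω)) 0 ∂μ
      ≤ ∫ ω, log (1 + max (k - T ω) 0) ∂μ :=
        integral_mono_of_nonneg (ae_of_all _ fun ω => le_max_right _ _)
          (integrable_log_of_one_le hint hone)
          (hT1.mono fun ω ht => max_log_sub_log_zero_le_log_one_add hk ht)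
    _ ≤ log (∫ ω, 1 + max (k - T ω) 0 ∂μ) := integral_log_le_log_integral hint hone
    _ = log (1 + ∫ ω, max (k - T ω) 0 ∂μ) := by
        rw [integral_add (integrable_const 1) hint1, integral_const, probReal_univ, one_smul]
    _ ≤ log (1 + C) := log_le_log (by linarith) (by linarith)

theorem pos_part_log_expectation_bound {Ω : Type*} [MeasurableSpace Ω] (μ : Measure Ω)
    [IsProbabilityMeasure μ] (T : Ω → ℝ) (hT1 : ∀ᵐ ω ∂μ, 1 ≤ T ω)
    (k C : ℝ) (hk : 0 ≤ k) (hC : 0 ≤ C)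
    (hint1 : Integrable (fun ω => max (k - T ω) 0) μ)
    (hint2 : Integrable (fun ω => max (Real.log k - Real.log (T ω)) 0) μ)
    (hbound : ∫ ω, max (k - T ω) 0 ∂μ ≤ C) :
    ∫ ω, max (Real.log k - Real.log (T ω)) 0 ∂μ ≤ Real.log (1 + C) :=
  pos_part_log_expectation_bound_general μ T hT1 k C hk hint1 hbound
end

section
/- Define $g : (0, \infty) \to \mathbb{R}$ by $g(c) = (1 - e^{-c})^{-c}$. Then $g(\ln 2) = 2^{\ln 2}$, and for all $c > 0$, $g(c) \leq 2^{\ln 2}$, with the maximum attained at $c = \ln 2$. -/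
/-!
With `x = exp (-c)` and `y = 1 - exp (-c)` the claim is `log x * log y ≤ (log 2)²` whenever
`x + y = 1`. Put `c = -log x`, `s = -log y` and `M u = log (exp (exp u) - 1)`. Then
`M (log c) + M (log s) = log (y / x) + log (x / y) = 0`, and `M` is convex since
`M' u = T / (1 - exp (-T))` with `T = exp u`, an increasing function of `T` (the reciprocal of
a secant slope of `exp`). So `M ≤ 0` at the midpoint `m` of `log c` and `log s`, i.e.
`exp (exp m) ≤ 2`, whence `c * s = exp m ^ 2 ≤ (log 2)²`.
-/

open Real Set

lemma antitoneOn_one_sub_exp_neg_div :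
    AntitoneOn (fun T : ℝ => (1 - exp (-T)) / T) (Ioi 0) := by
  intro a (ha : 0 < a) b (hb : 0 < b) hab
  have h := convexOn_exp.secant_mono (a := 0) (x := -b) (y := -a) trivial trivial trivial
    (by linarith) (by linarith) (by linarith)
  rw [exp_zero] at h
  simpa only [sub_zero, div_neg, ← neg_div, neg_sub] using h

lemma monotoneOn_div_one_sub_exp_neg :
    MonotoneOn (fun T : ℝ => T / (1 - exp (-T))) (Ioi 0) := by
  intro a (ha : 0 < a) b (hb : 0 < b) hab
  have hpos : 0 < (1 - exp (-b)) / b := div_pos (by simpa using hb) hb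
  simpa only [inv_div] using inv_anti₀ hpos (antitoneOn_one_sub_exp_neg_div ha hb hab)

lemma hasDerivAt_log_exp_exp_sub_one (u : ℝ) :
    HasDerivAt (fun u => log (exp (exp u) - 1)) (exp u / (1 - exp (-exp u))) u := by
  have hT : 1 < exp (exp u) := one_lt_exp_iff.2 (exp_pos u)
  convert (((hasDerivAt_exp u).exp).sub_const 1).log (by linarith) using 1
  rw [exp_neg]
  field_simp

lemma convexOn_log_exp_exp_sub_one : ConvexOn ℝ univ (fun u => log (exp (exp u) - 1)) := by
  refine Monotone.convexOn_univ_of_deriv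
    (fun u => (hasDerivAt_log_exp_exp_sub_one u).differentiableAt) fun u v huv => ?_
  simp only [(hasDerivAt_log_exp_exp_sub_one _).deriv]
  exact monotoneOn_div_one_sub_exp_neg (exp_pos u) (exp_pos v) (exp_le_exp.2 huv)

lemma log_mul_log_le_log_two_sq {x y : ℝ} (hx : 0 < x) (hy : 0 < y) (hxy : x + y = 1) :
    log x * log y ≤ log 2 ^ 2 := by
  set M : ℝ → ℝ := fun u => log (exp (exp u) - 1)
  have hc : 0 < -log x := neg_pos.2 (log_neg hx (by linarith))
  have hs : 0 < -log y := neg_pos.2 (log_neg hy (by linarith))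
  have hM : ∀ {a b : ℝ}, 0 < a → 0 < b → a + b = 1 → M (log (-log a)) = log (b / a) := by
    intro a b ha hb hab
    simp only [M, exp_log (neg_pos.2 (log_neg ha (by linarith))), exp_neg, exp_log ha]
    congr 1
    field_simp
    linarith
  set m := (1 / 2 : ℝ) * log (-log x) + (1 / 2 : ℝ) * log (-log y)
  have hMm : M m ≤ 0 := by
    have hsum : M (log (-log x)) + M (log (-log y)) = 0 := by
      rw [hM hx hy hxy, hM hy hx (by linarith), ← log_mul (by positivity) (by positivity),
        div_mul_div_comm, mul_comm y, div_self (by positivity), log_one]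
    have := convexOn_log_exp_exp_sub_one.2 (mem_univ (log (-log x))) (mem_univ (log (-log y)))
      (by norm_num : (0 : ℝ) ≤ 1 / 2) (by norm_num : (0 : ℝ) ≤ 1 / 2) (by norm_num)
    simp only [smul_eq_mul] at this
    linarith
  have hem : exp m ≤ log 2 := by
    have h1 : 1 < exp (exp m) := one_lt_exp_iff.2 (exp_pos m)
    rw [le_log_iff_exp_le two_pos]
    have := (log_nonpos_iff (by linarith)).1 hMm
    linarith
  have hcs : log x * log y = exp m ^ 2 := by
    rw [← exp_nat_mul, show ((2 : ℕ) : ℝ) * m = log (-log x) + log (-log y) by simp [m]; ring,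
      exp_add, exp_log hc, exp_log hs]
    ring
  rw [hcs]
  exact pow_le_pow_left₀ (exp_pos m).le hem 2

theorem gap_function_max_submodular :
    (1 - Real.exp (-Real.log 2)) ^ (-Real.log 2) = (2 : ℝ) ^ Real.log 2 ∧
    ∀ c : ℝ, 0 < c → (1 - Real.exp (-c)) ^ (-c) ≤ (2 : ℝ) ^ Real.log 2 := by
  constructor
  · rw [exp_neg, exp_log two_pos, show (1 : ℝ) - 2⁻¹ = 2⁻¹ by norm_num,
      inv_rpow zero_le_two, rpow_neg zero_le_two, inv_inv]
  · intro c hc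
    have hx : 0 < exp (-c) := exp_pos _
    have hy : 0 < 1 - exp (-c) := sub_pos.2 (exp_lt_one_iff.2 (neg_neg_of_pos hc))
    rw [rpow_def_of_pos hy, rpow_def_of_pos two_pos, exp_le_exp]
    calc log (1 - exp (-c)) * -c = log (exp (-c)) * log (1 - exp (-c)) := by rw [log_exp]; ring
      _ ≤ log 2 ^ 2 := log_mul_log_le_log_two_sq hx hy (add_sub_cancel _ _)
      _ = log 2 * log 2 := sq _
end
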